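/- For d ≥ 2 and λ > 0, ∫_{ℝ_+^d} exp(−λ · y_1⋯y_d · (1/y_1 + ⋯ + 1/y_d)) dy = (Γ(1/(d−1))^d / (d−1)) · λ^{−d/(d−1)}. -/

import Mathlib

/-!
The substitution `u i = ∏_{ℓ ≠ i} y ℓ` maps the open orthant bijectively onto itself when
`d ≥ 2` (inverse `y i = (∏ u)^(1/(d-1)) / u i`). Its Jacobian matrix is
`diag(1/y) · (∏ y)(J - I) · diag(1/y)` with `J` the all-ones matrix, so its determinant has
absolute value `(d - 1) (∏ y)^(d-2)`. Since `∏ i, u i = (∏ y)^(d-1)`, this factor is cancelled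
exactly by the Gamma weight `∏ i, u i ^ (a - 1)` with `a = 1/(d-1)`; hence `(d - 1)` times the
integral equals `∫ ∏ i, u i ^ (a - 1) exp(-λ u i) du = (Γ(a) λ^(-a))^d` by Fubini.
-/

open MeasureTheory Finset

def positiveOrthant (ι : Type*) : Set (ι → ℝ) := Set.univ.pi fun _ => Set.Ioi 0

theorem mem_positiveOrthant {ι : Type*} {y : ι → ℝ} : y ∈ positiveOrthant ι ↔ ∀ i, 0 < y i := by
  simp [positiveOrthant]

theorem measurableSet_positiveOrthant {ι : Type*} [Countable ι] :
    MeasurableSet (positiveOrthant ι) :=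
  MeasurableSet.univ_pi fun _ => measurableSet_Ioi

theorem setIntegral_positiveOrthant_prod {ι : Type*} [Fintype ι] (f : ℝ → ℝ) :
    ∫ u in positiveOrthant ι, ∏ i, f (u i) = (∫ t in Set.Ioi 0, f t) ^ Fintype.card ι := by
  rw [positiveOrthant, volume_pi, Measure.restrict_pi_pi, integral_fintype_prod_eq_pow]

theorem det_allOnes_sub_one {n R : Type*} [Fintype n] [DecidableEq n] [CommRing R] :
    ((Matrix.of fun _ _ : n => (1 : R)) - 1).det = (-1) ^ Fintype.card n * (1 - Fintype.card n) := by
  have hrank_one : (1 : Matrix n n R) - Matrix.of (fun _ _ => 1) =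
      1 + Matrix.replicateCol Unit (fun _ : n => (1 : R)) *
        Matrix.replicateRow Unit (fun _ : n => (-1 : R)) := by
    ext i j
    simp [Matrix.mul_apply, sub_eq_add_neg]
  rw [← neg_sub, Matrix.det_neg, hrank_one, Matrix.det_one_add_replicateCol_mul_replicateRow]
  simp [dotProduct, sub_eq_add_neg]

section prodErase

variable {ι : Type*} [Fintype ι] [DecidableEq ι]

def prodErase (y : ι → ℝ) (i : ι) : ℝ := ∏ ℓ ∈ univ.erase i, y ℓ

theorem prodErase_mul_self (y : ι → ℝ) (i : ι) : prodErase y i * y i = ∏ ℓ, y ℓ :=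
  prod_erase_mul _ _ (mem_univ i)

theorem prodErase_pos {y : ι → ℝ} (hy : y ∈ positiveOrthant ι) (i : ι) : 0 < prodErase y i :=
  prod_pos fun ℓ _ => mem_positiveOrthant.mp hy ℓ

theorem prod_prodErase (y : ι → ℝ) :
    ∏ i, prodErase y i = (∏ i, y i) ^ (Fintype.card ι - 1) := by
  rw [← prod_pow]
  refine (prod_comm' (s' := univ.erase) fun i ℓ => ?_).trans
    (prod_congr rfl fun ℓ _ => ?_)
  · simp [ne_comm]
  · rw [prod_const, card_erase_of_mem (mem_univ ℓ), card_univ]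

theorem mapsTo_prodErase : Set.MapsTo prodErase (positiveOrthant ι) (positiveOrthant ι) :=
  fun _ hy => mem_positiveOrthant.mpr (prodErase_pos hy)

theorem surjOn_prodErase (hι : 2 ≤ Fintype.card ι) :
    Set.SurjOn prodErase (positiveOrthant ι) (positiveOrthant ι) := by
  intro u hu
  rw [mem_positiveOrthant] at hu
  have hU : 0 < ∏ i, u i := prod_pos fun i _ => hu i
  set Q := (∏ i, u i) ^ ((Fintype.card ι - 1 : ℕ) : ℝ)⁻¹
  have hQ : 0 < Q := by positivity
  have hQ_pow : Q ^ (Fintype.card ι - 1) = ∏ i, u i := Real.rpow_inv_natCast_pow hU.le (by omega)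
  refine ⟨fun i => Q / u i, mem_positiveOrthant.mpr fun i => div_pos hQ (hu i), funext fun i => ?_⟩
  have hcard : #(univ.erase i) = Fintype.card ι - 1 := by simp
  have hrest : ∏ ℓ ∈ univ.erase i, u ℓ ≠ 0 := (prod_pos fun ℓ _ => hu ℓ).ne'
  rw [prodErase, prod_div_distrib, prod_const, hcard, hQ_pow, ← prod_erase_mul _ _ (mem_univ i)]
  field_simp

theorem injOn_prodErase (hι : 2 ≤ Fintype.card ι) :
    Set.InjOn prodErase (positiveOrthant ι) := by
  intro y hy y' hy' h
  have hprod : ∏ i, y i = ∏ i, y' i := by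
    rw [mem_positiveOrthant] at hy hy'
    refine (pow_left_inj₀ (prod_pos fun i _ => hy i).le (prod_pos fun i _ => hy' i).le
      (by omega : Fintype.card ι - 1 ≠ 0)).mp ?_
    simp only [← prod_prodErase, h]
  funext i
  refine mul_left_cancel₀ (prodErase_pos hy i).ne' ?_
  rw [prodErase_mul_self, hprod, h, prodErase_mul_self]

theorem image_prodErase (hι : 2 ≤ Fintype.card ι) :
    prodErase '' positiveOrthant ι = positiveOrthant ι :=
  (surjOn_prodErase hι).image_eq_of_mapsTo mapsTo_prodErase

def prodEraseJacobian (y : ι → ℝ) : Matrix ι ι ℝ :=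
  Matrix.of fun i j => if j = i then 0 else ∏ ℓ ∈ (univ.erase i).erase j, y ℓ

theorem hasFDerivAt_prodErase (y : ι → ℝ) :
    HasFDerivAt prodErase (Matrix.toLin' (prodEraseJacobian y)).toContinuousLinearMap y := by
  rw [hasFDerivAt_pi']
  intro i
  have hcoord : ∀ j ∈ univ.erase i, HasFDerivAt (fun y : ι → ℝ => y j)
      (ContinuousLinearMap.proj j : (ι → ℝ) →L[ℝ] ℝ) y := fun j _ => hasFDerivAt_apply j y
  refine (HasFDerivAt.finsetProd hcoord).congr_fderiv ?_
  ext h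
  simp only [_root_.sum_apply, smul_apply, ContinuousLinearMap.proj_apply, smul_eq_mul,
    ContinuousLinearMap.comp_apply, LinearMap.coe_toContinuousLinearMap', Matrix.toLin'_apply,
    Matrix.mulVec, dotProduct]
  rw [← sum_erase (f := fun j => prodEraseJacobian y i j * h j) univ (a := i)
    (by simp [prodEraseJacobian])]
  exact sum_congr rfl fun j hj => by simp [prodEraseJacobian, ne_of_mem_erase hj]

theorem prodEraseJacobian_eq {y : ι → ℝ} (hy : ∀ i, y i ≠ 0) :
    prodEraseJacobian y = Matrix.diagonal y⁻¹ *
      ((∏ i, y i) • ((Matrix.of fun _ _ => 1) - 1)) * Matrix.diagonal y⁻¹ := by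
  ext i j
  rw [Matrix.mul_diagonal, Matrix.diagonal_mul]
  by_cases hji : j = i
  · simp [prodEraseJacobian, hji]
  · have hj : j ∈ univ.erase i := mem_erase.mpr ⟨hji, mem_univ j⟩
    rw [← prod_erase_mul _ _ (mem_univ i), ← prod_erase_mul _ _ hj]
    simp [prodEraseJacobian, hji, Matrix.one_apply_ne' hji]
    field_simp [hy i, hy j]

theorem det_prodEraseJacobian {y : ι → ℝ} (hι : 2 ≤ Fintype.card ι) (hy : ∀ i, y i ≠ 0) :
    (prodEraseJacobian y).det =
      (-1) ^ Fintype.card ι * (1 - Fintype.card ι) * (∏ i, y i) ^ (Fintype.card ι - 2) := by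
  have hP : ∏ i, y i ≠ 0 := prod_ne_zero_iff.mpr fun i _ => hy i
  obtain ⟨m, hm⟩ := Nat.exists_eq_add_of_le hι
  rw [prodEraseJacobian_eq hy, Matrix.det_mul, Matrix.det_mul, Matrix.det_smul,
    det_allOnes_sub_one, Matrix.det_diagonal, Pi.inv_def, prod_inv_distrib, hm,
    Nat.add_sub_cancel_left]
  field_simp
  ring

theorem abs_det_prodEraseJacobian {y : ι → ℝ} (hι : 2 ≤ Fintype.card ι)
    (hy : y ∈ positiveOrthant ι) :
    |(prodEraseJacobian y).det| =
      ((Fintype.card ι : ℝ) - 1) * (∏ i, y i) ^ (Fintype.card ι - 2) := by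
  rw [mem_positiveOrthant] at hy
  have hn : (2 : ℝ) ≤ Fintype.card ι := by exact_mod_cast hι
  rw [det_prodEraseJacobian hι fun i => (hy i).ne', abs_mul, abs_mul, abs_pow, abs_neg, abs_one,
    one_pow, one_mul, abs_of_nonpos (by linarith),
    abs_of_pos (pow_pos (prod_pos fun i _ => hy i) _)]
  ring

theorem setIntegral_positiveOrthant_eq_setIntegral_comp_prodErase (hι : 2 ≤ Fintype.card ι)
    (g : (ι → ℝ) → ℝ) :
    ∫ u in positiveOrthant ι, g u = ∫ y in positiveOrthant ι,
      ((Fintype.card ι : ℝ) - 1) * (∏ i, y i) ^ (Fintype.card ι - 2) * g (prodErase y) := by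
  conv_lhs => rw [← image_prodErase hι]
  rw [integral_image_eq_integral_abs_det_fderiv_smul volume measurableSet_positiveOrthant
    (fun y _ => (hasFDerivAt_prodErase y).hasFDerivWithinAt) (injOn_prodErase hι)]
  refine setIntegral_congr_fun measurableSet_positiveOrthant fun y hy => ?_
  rw [ContinuousLinearMap.det, LinearMap.coe_toContinuousLinearMap, LinearMap.det_toLin',
    abs_det_prodEraseJacobian hι hy, smul_eq_mul]

theorem prod_pow_mul_prod_prodErase_rpow {y : ι → ℝ} (hι : 2 ≤ Fintype.card ι)
    (hy : y ∈ positiveOrthant ι) :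
    (∏ i, y i) ^ (Fintype.card ι - 2) *
      ∏ i, prodErase y i ^ (1 / ((Fintype.card ι : ℝ) - 1) - 1) = 1 := by
  have hP : 0 < ∏ i, y i := prod_pos fun i _ => mem_positiveOrthant.mp hy i
  have hn : (Fintype.card ι : ℝ) - 1 ≠ 0 := by
    have : (2 : ℝ) ≤ Fintype.card ι := by exact_mod_cast hι
    linarith
  rw [Real.finsetProd_rpow _ _ fun i _ => (prodErase_pos hy i).le, prod_prodErase,
    ← Real.rpow_natCast, ← Real.rpow_natCast, ← Real.rpow_mul hP.le, ← Real.rpow_add hP]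
  convert Real.rpow_zero _
  push_cast [Nat.cast_sub hι, Nat.cast_sub (one_le_two.trans hι)]
  field_simp
  ring

theorem setIntegral_positiveOrthant_exp_neg_mul_sum_prodErase (hι : 2 ≤ Fintype.card ι)
    {lam : ℝ} (hlam : 0 < lam) :
    ∫ y in positiveOrthant ι, Real.exp (-(lam * ∑ j, prodErase y j)) =
      Real.Gamma (1 / ((Fintype.card ι : ℝ) - 1)) ^ Fintype.card ι / ((Fintype.card ι : ℝ) - 1) *
        lam ^ (-(Fintype.card ι : ℝ) / ((Fintype.card ι : ℝ) - 1)) := by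
  set n := Fintype.card ι
  set a := 1 / ((n : ℝ) - 1)
  have hn : 0 < (n : ℝ) - 1 := by
    have : (2 : ℝ) ≤ n := by exact_mod_cast hι
    linarith
  set f : ℝ → ℝ := fun t => t ^ (a - 1) * Real.exp (-(lam * t))
  have hweight : ∀ y ∈ positiveOrthant ι, ((n : ℝ) - 1) * (∏ i, y i) ^ (n - 2) *
      ∏ i, f (prodErase y i) = ((n : ℝ) - 1) * Real.exp (-(lam * ∑ j, prodErase y j)) := by
    intro y hy
    rw [prod_mul_distrib, ← Real.exp_sum, ← mul_assoc, mul_assoc _ (_ ^ _),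
      prod_pow_mul_prod_prodErase_rpow hι hy, mul_sum, ← sum_neg_distrib, mul_one]
  calc ∫ y in positiveOrthant ι, Real.exp (-(lam * ∑ j, prodErase y j))
      = ((n : ℝ) - 1)⁻¹ * ∫ u in positiveOrthant ι, ∏ i, f (u i) := by
        rw [setIntegral_positiveOrthant_eq_setIntegral_comp_prodErase hι (fun u => ∏ i, f (u i)),
          setIntegral_congr_fun measurableSet_positiveOrthant hweight,
          integral_const_mul, inv_mul_cancel_left₀ hn.ne']
    _ = ((n : ℝ) - 1)⁻¹ * ((1 / lam) ^ a * Real.Gamma a) ^ n := by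
        rw [setIntegral_positiveOrthant_prod,
          Real.integral_rpow_mul_exp_neg_mul_Ioi (by positivity) hlam]
    _ = _ := by
        have hexp : -a * n = -(n : ℝ) / ((n : ℝ) - 1) := by simp only [a]; ring
        rw [mul_pow, one_div lam, Real.inv_rpow hlam.le, ← Real.rpow_neg hlam.le,
          ← Real.rpow_natCast, ← Real.rpow_mul hlam.le, hexp]
        ring

end prodErase

/-- For `d ≥ 2` and `λ > 0`,
`∫_{ℝ_+^d} exp(−λ y_1⋯y_d (1/y_1+⋯+1/y_d)) dy = (Γ(1/(d−1))^d/(d−1)) λ^{−d/(d−1)}`. -/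
theorem integral_phi_d_scaled (d : ℕ) (hd : 2 ≤ d) (lam : ℝ) (hlam : 0 < lam) :
    ∫ y in (Set.univ.pi fun _ : Fin d => Set.Ioi (0 : ℝ)),
        Real.exp (-(lam * ∑ j : Fin d, ∏ ℓ ∈ Finset.univ.erase j, y ℓ)) =
      Real.Gamma (1 / ((d : ℝ) - 1)) ^ d / ((d : ℝ) - 1) *
        lam ^ (-(d : ℝ) / ((d : ℝ) - 1)) := by
  have h := setIntegral_positiveOrthant_exp_neg_mul_sum_prodErase (ι := Fin d)
    (by rwa [Fintype.card_fin]) hlam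
  rw [Fintype.card_fin] at h
  exact h
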